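/- arXiv:1003.3171 — 3 statements merged into one kernel-verified Lean document; each statement's English description precedes it below -/
import Mathlib

section
/- Let U ⊆ ℝⁿ be bounded open, α, r > 0, and let f, g ∈ C(U) be bounded with osc_U f ≤ α and osc_U g ≤ α. Suppose 0 < t < t₀(α, r) and that for every x ∈ U_{2r}: T^t f(x) + T_t f(x) − 2 f(x) ≥ 0 ≥ T^t g(x) + T_t g(x) − 2 g(x). Then either max over the closure of U_r of (f − g) equals the max of (f − g) over (closure of U_r) \ U_{2r}, or else there exists x₀ ∈ U_{2r} such that f(x₀) = T^t f(x₀) = T_t f(x₀) and g(x₀) = T^t g(x₀) = T_t g(x₀). -/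
open Set Metric MeasureTheory Filter Bornology
open scoped RealInnerProductSpace

noncomputable section

abbrev Euc (n : ℕ) := EuclideanSpace ℝ (Fin n)

variable {n : ℕ}

/-- The Lagrangian of `H`, an extended real number. -/
def Lag (H : Euc n → ℝ) (q : Euc n) : EReal :=
  ⨆ p : Euc n, ((⟪p, q⟫ - H p : ℝ) : EReal)

/-- `T^t u (x)`, with supremum taken over `y ∈ S`. Points `y` where the Lagrangian term
is `+∞` contribute nothing, since no real number equals `-∞`. -/
def TupOn (H : Euc n → ℝ) (S : Set (Euc n)) (u : Euc n → ℝ) (t : ℝ) (x : Euc n) : ℝ :=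
  if t = 0 then u x
  else sSup {r : ℝ | ∃ y ∈ S, (r : EReal) = (u y : EReal) - (t : EReal) * Lag H (t⁻¹ • (y - x))}

/-- `T_t u (x)`, with infimum taken over `y ∈ S`. -/
def TdnOn (H : Euc n → ℝ) (S : Set (Euc n)) (u : Euc n → ℝ) (t : ℝ) (x : Euc n) : ℝ :=
  if t = 0 then u x
  else sInf {r : ℝ | ∃ y ∈ S, (r : EReal) = (u y : EReal) + (t : EReal) * Lag H (t⁻¹ • (x - y))}

/-- `S⁺ u (x) = limsup_{t ↓ 0} (T^t u(x) - u(x))/t`. -/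
def Splus (H : Euc n → ℝ) (U : Set (Euc n)) (u : Euc n → ℝ) (x : Euc n) : ℝ :=
  limsup (fun t => (TupOn H U u t x - u x) / t) (nhdsWithin 0 (Ioi 0))

/-- The oscillation `osc_U u = sup_U u - inf_U u`. -/
def oscOn (u : Euc n → ℝ) (U : Set (Euc n)) : ℝ := sSup (u '' U) - sInf (u '' U)

/-- `U_r = {x ∈ U : dist(x, ∂U) > r}`. -/
def inUr (U : Set (Euc n)) (r : ℝ) : Set (Euc n) := {x ∈ U | r < infDist x (frontier U)}

/-- The cone function `C_k(x) = max {p·x : H(p) = k}`. -/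
def coneFn (H : Euc n → ℝ) (k : ℝ) (x : Euc n) : ℝ :=
  sSup {r : ℝ | ∃ p, H p = k ∧ r = ⟪p, x⟫}

/-- The subdifferential of `H` at `p`. -/
def subdiff (H : Euc n → ℝ) (p : Euc n) : Set (Euc n) :=
  {q | ∀ p', H p + ⟪q, p' - p⟫ ≤ H p'}

/-- `Γ_k`: subgradients of `H` at points of the level set `H⁻¹(k)`. -/
def GammaSet (H : Euc n → ℝ) (k : ℝ) : Set (Euc n) :=
  {q | ∃ p, H p = k ∧ q ∈ subdiff H p}

/-- `W_k`: subgradients of `H` at points of the sublevel set `H⁻¹([0,k])`. -/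
def WSet (H : Euc n → ℝ) (k : ℝ) : Set (Euc n) :=
  {q | ∃ p, 0 ≤ H p ∧ H p ≤ k ∧ q ∈ subdiff H p}

/-- `u ∈ Lip_loc(U)`: `u` is locally Lipschitz on `U`. -/
def LocLipOn (u : Euc n → ℝ) (U : Set (Euc n)) : Prop :=
  ∀ x ∈ U, ∃ K : NNReal, ∃ s ∈ nhdsWithin x U, LipschitzOnWith K u s

/-- `ess sup_V H(Dv)`, defined to be `+∞` if `v` is not locally Lipschitz in `V`.
Here `Dv` is the a.e.-defined gradient (Rademacher). -/
def essSupH (H : Euc n → ℝ) (V : Set (Euc n)) (v : Euc n → ℝ) : EReal :=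
  haveI := Classical.propDecidable (LocLipOn v V)
  if LocLipOn v V then
    essSup (fun x => ((H (gradient v x) : ℝ) : EReal)) (volume.restrict V)
  else ⊤

/-- `u` is absolutely subminimizing for `H` in `U`. -/
def AbsSubmin (H : Euc n → ℝ) (U : Set (Euc n)) (u : Euc n → ℝ) : Prop :=
  LocLipOn u U ∧
  ∀ V : Set (Euc n), IsOpen V → IsCompact (closure V) → closure V ⊆ U →
    ∀ v : Euc n → ℝ, LocLipOn v V → ContinuousOn v (closure V) →
      EqOn v u (frontier V) → (∀ x ∈ V, v x ≤ u x) →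
        essSupH H V u ≤ essSupH H V v

/-- `u` is absolutely superminimizing for `H` in `U`. -/
def AbsSupermin (H : Euc n → ℝ) (U : Set (Euc n)) (u : Euc n → ℝ) : Prop :=
  LocLipOn u U ∧
  ∀ V : Set (Euc n), IsOpen V → IsCompact (closure V) → closure V ⊆ U →
    ∀ v : Euc n → ℝ, LocLipOn v V → ContinuousOn v (closure V) →
      EqOn v u (frontier V) → (∀ x ∈ V, u x ≤ v x) →
        essSupH H V u ≤ essSupH H V v

/-- `u` satisfies comparisons with cones from above in `U`. -/
def CmpConesAbove (H : Euc n → ℝ) (U : Set (Euc n)) (u : Euc n → ℝ) : Prop :=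
  ∀ k : ℝ, 0 ≤ k → ∀ V : Set (Euc n), IsOpen V → IsCompact (closure V) → closure V ⊆ U →
    ∀ x₀, x₀ ∉ V →
      sSup ((fun x => u x - coneFn H k (x - x₀)) '' closure V) =
      sSup ((fun x => u x - coneFn H k (x - x₀)) '' frontier V)

/-- `u` satisfies the convexity criterion in `U`. -/
def ConvexityCriterion (H : Euc n → ℝ) (U : Set (Euc n)) (u : Euc n → ℝ) : Prop :=
  ∀ V : Set (Euc n), IsOpen V → IsCompact (closure V) → closure V ⊆ U →
    ∃ δ > (0:ℝ), ∀ x ∈ V, ConvexOn ℝ (Icc 0 δ) (fun t => TupOn H U u t x)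

/-- `u` satisfies the pointwise convexity criterion in `U`. -/
def PtwiseCC (H : Euc n → ℝ) (U : Set (Euc n)) (u : Euc n → ℝ) : Prop :=
  UpperSemicontinuousOn (Splus H U u) U ∧
  ∀ x ∈ U, ∃ δ > (0:ℝ), ConvexOn ℝ (Icc 0 δ) (fun t => TupOn H U u t x)

end

/-!
Choose `x₀` maximising `f - g` on the compact set `K = closure U_r` and, among these maximisers,
maximising `f`. If `x₀ ∉ U_{2r}`, the maximum of `f - g` is attained off `U_{2r}`. Otherwise
`B(x₀, r) ∩ U ⊆ K`, the operators at `x₀` only see this set (by the choice of `t`), and on it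
`f ≤ g + c` with `c = (f - g)(x₀)`. Hence `T^t f ≤ T^t g + c` and `T_t f ≤ T_t g + c` at `x₀`, and
the two inequalities at `x₀` force `T^t f(x₀) - T^t g(x₀) = c`. So near-maximisers for
`T^t f(x₀)` nearly maximise `f - g`; by compactness they accumulate at a maximiser `z` of `f - g`
with `T^t f(x₀) ≤ f z ≤ f x₀`. Thus `T^t f(x₀) = f(x₀)`, and the remaining equalities follow by
linear arithmetic.
-/

section Lagrangian

variable {n : ℕ} {H : Euc n → ℝ}

lemma Lag_nonneg (hH0 : H 0 = 0) (q : Euc n) : 0 ≤ Lag H q := by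
  simpa [Lag, hH0] using le_iSup (fun p : Euc n => ((⟪p, q⟫ - H p : ℝ) : EReal)) 0

lemma Lag_zero (hH0 : H 0 = 0) (hH : ∀ p, 0 ≤ H p) : Lag H 0 = 0 :=
  le_antisymm (iSup_le fun p => EReal.coe_nonpos.2 (by simp [hH p])) (Lag_nonneg hH0 0)

lemma Lag_comp_neg (q : Euc n) : Lag (fun p => H (-p)) q = Lag H (-q) := by
  simp only [Lag]
  rw [← (Equiv.neg (Euc n)).iSup_comp]
  simp [inner_neg_left, inner_neg_right]

end Lagrangian

section HopfLax

variable {n : ℕ} {H : Euc n → ℝ} {S : Set (Euc n)} {u v : Euc n → ℝ} {t : ℝ} {x : Euc n}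

def supCandidates (H : Euc n → ℝ) (S : Set (Euc n)) (u : Euc n → ℝ) (t : ℝ) (x : Euc n) :
    Set ℝ :=
  {r | ∃ y ∈ S, ∃ l : ℝ, 0 ≤ l ∧ (t : EReal) * Lag H (t⁻¹ • (y - x)) = l ∧ r = u y - l}

lemma TupOn_eq_sSup_supCandidates (hH0 : H 0 = 0) (ht : 0 < t) :
    TupOn H S u t x = sSup (supCandidates H S u t x) := by
  rw [TupOn, if_neg ht.ne']
  congr 1
  ext r
  constructor
  · rintro ⟨y, hy, hr⟩
    set L := (t : EReal) * Lag H (t⁻¹ • (y - x))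
    have hL0 : 0 ≤ L := mul_nonneg (EReal.coe_nonneg.2 ht.le) (Lag_nonneg hH0 _)
    have hLbot : L ≠ ⊥ := ne_bot_of_le_ne_bot EReal.zero_ne_bot hL0
    have hLtop : L ≠ ⊤ := by
      rintro hL
      rw [hL, EReal.sub_top] at hr
      exact EReal.coe_ne_bot r hr
    refine ⟨y, hy, L.toReal, EReal.toReal_nonneg hL0, (EReal.coe_toReal hLtop hLbot).symm, ?_⟩
    exact EReal.coe_injective (by rw [EReal.coe_sub, EReal.coe_toReal hLtop hLbot, hr])
  · rintro ⟨y, hy, l, -, hl, rfl⟩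
    exact ⟨y, hy, by rw [hl, EReal.coe_sub]⟩

lemma mem_supCandidates_self (hH0 : H 0 = 0) (hH : ∀ p, 0 ≤ H p) (hx : x ∈ S) :
    u x ∈ supCandidates H S u t x :=
  ⟨x, hx, 0, le_rfl, by simp [Lag_zero hH0 hH], by simp⟩

lemma bddAbove_supCandidates (hu : BddAbove (u '' S)) : BddAbove (supCandidates H S u t x) := by
  obtain ⟨B, hB⟩ := hu
  refine ⟨B, ?_⟩
  rintro _ ⟨y, hy, l, hl, -, rfl⟩
  linarith [hB (mem_image_of_mem u hy)]

lemma le_TupOn (hH0 : H 0 = 0) (hH : ∀ p, 0 ≤ H p) (ht : 0 < t) (hx : x ∈ S)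
    (hu : BddAbove (u '' S)) : u x ≤ TupOn H S u t x := by
  rw [TupOn_eq_sSup_supCandidates hH0 ht]
  exact le_csSup (bddAbove_supCandidates hu) (mem_supCandidates_self hH0 hH hx)

lemma TupOn_le_TupOn_add (hH0 : H 0 = 0) (hH : ∀ p, 0 ≤ H p) (ht : 0 < t) (hx : x ∈ S)
    {c : ℝ} (hv : BddAbove (v '' S)) (huv : ∀ y ∈ S, u y ≤ v y + c) :
    TupOn H S u t x ≤ TupOn H S v t x + c := by
  rw [TupOn_eq_sSup_supCandidates hH0 ht, TupOn_eq_sSup_supCandidates hH0 ht]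
  refine csSup_le ⟨u x, mem_supCandidates_self hH0 hH hx⟩ ?_
  rintro _ ⟨y, hy, l, hl0, hl, rfl⟩
  have : v y - l ≤ sSup (supCandidates H S v t x) :=
    le_csSup (bddAbove_supCandidates hv) ⟨y, hy, l, hl0, hl, rfl⟩
  linarith [huv y hy]

/-- A near-maximiser `y` for `T^t u(x)` competes, with the same cost, in the supremum defining
`T^t v(x)`. -/
lemma exists_near_TupOn (hH0 : H 0 = 0) (hH : ∀ p, 0 ≤ H p) (ht : 0 < t) (hx : x ∈ S)
    (hv : BddAbove (v '' S)) {ε : ℝ} (hε : 0 < ε) :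
    ∃ y ∈ S, TupOn H S u t x - ε < u y ∧
      TupOn H S u t x - TupOn H S v t x - ε < u y - v y := by
  rw [TupOn_eq_sSup_supCandidates hH0 ht, TupOn_eq_sSup_supCandidates hH0 ht]
  obtain ⟨_, ⟨y, hy, l, hl0, hl, rfl⟩, hlt⟩ :=
    exists_lt_of_lt_csSup ⟨u x, mem_supCandidates_self hH0 hH hx⟩
      (sub_lt_self (sSup (supCandidates H S u t x)) hε)
  have : v y - l ≤ sSup (supCandidates H S v t x) :=
    le_csSup (bddAbove_supCandidates hv) ⟨y, hy, l, hl0, hl, rfl⟩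
  exact ⟨y, hy, by linarith, by linarith⟩

lemma TdnOn_eq_neg_TupOn : TdnOn H S u t x = -TupOn (fun p => H (-p)) S (-u) t x := by
  by_cases ht : t = 0
  · simp [TdnOn, TupOn, ht]
  rw [TdnOn, TupOn, if_neg ht, if_neg ht, Real.sInf_def]
  congr 2
  ext r
  simp only [Set.mem_neg, mem_ofPred_eq, Pi.neg_apply, Lag_comp_neg, ← smul_neg, neg_sub]
  refine exists_congr fun y => and_congr_right fun _ => ?_
  rw [← neg_inj, ← EReal.coe_neg, neg_neg, EReal.neg_add (.inl (EReal.coe_ne_bot _))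
    (.inl (EReal.coe_ne_top _)), EReal.coe_neg]

lemma TdnOn_le (hH0 : H 0 = 0) (hH : ∀ p, 0 ≤ H p) (ht : 0 < t) (hx : x ∈ S)
    (hu : BddBelow (u '' S)) : TdnOn H S u t x ≤ u x := by
  rw [TdnOn_eq_neg_TupOn, neg_le]
  exact le_TupOn (by simpa using hH0) (fun p => hH (-p)) ht hx
    (by simpa [← image_neg_eq_neg, image_image] using hu.neg)

lemma TdnOn_le_TdnOn_add (hH0 : H 0 = 0) (hH : ∀ p, 0 ≤ H p) (ht : 0 < t) (hx : x ∈ S)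
    {c : ℝ} (hu : BddBelow (u '' S)) (huv : ∀ y ∈ S, u y ≤ v y + c) :
    TdnOn H S u t x ≤ TdnOn H S v t x + c := by
  rw [TdnOn_eq_neg_TupOn, TdnOn_eq_neg_TupOn]
  have := TupOn_le_TupOn_add (by simpa using hH0) (fun p => hH (-p)) ht hx (c := c)
    (u := -v) (v := -u) (by simpa [← image_neg_eq_neg, image_image] using hu.neg)
    (fun y hy => by simp only [Pi.neg_apply]; linarith [huv y hy])
  linarith

end HopfLax

section Compactness

variable {X : Type*} {K : Set X}

lemma IsMaxOn.csSup_image_eq {β : Type*} [ConditionallyCompleteLattice β] {f : X → β}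
    {s : Set X} {a : X} (h : IsMaxOn f K a) (ha : a ∈ s) (hs : s ⊆ K) : sSup (f '' s) = f a :=
  IsGreatest.csSup_eq ⟨mem_image_of_mem f ha, forall_mem_image.2 fun _ hy => h (hs hy)⟩

lemma IsCompact.exists_isMaxOn_isMaxOn [TopologicalSpace X] [T2Space X] (hK : IsCompact K)
    (hne : K.Nonempty) {φ f : X → ℝ} (hφ : ContinuousOn φ K) (hf : ContinuousOn f K) :
    ∃ x₀ ∈ K, IsMaxOn φ K x₀ ∧ IsMaxOn f {z ∈ K | φ x₀ ≤ φ z} x₀ := by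
  obtain ⟨x₁, hx₁, hmax₁⟩ := hK.exists_isMaxOn hne hφ
  have hA : IsCompact (K ∩ φ ⁻¹' Ici (φ x₁)) :=
    hK.of_isClosed_subset (hφ.preimage_isClosed_of_isClosed hK.isClosed isClosed_Ici)
      inter_subset_left
  obtain ⟨x₀, ⟨hx₀K, hx₀φ⟩, hmax₀⟩ :=
    hA.exists_isMaxOn ⟨x₁, hx₁, le_refl (φ x₁)⟩ (hf.mono inter_subset_left)
  have hφx₀ : φ x₁ ≤ φ x₀ := hx₀φ
  exact ⟨x₀, hx₀K, fun y hy => (hmax₁ hy).trans hφx₀,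
    hmax₀.on_subset fun z hz => ⟨hz.1, hφx₀.trans hz.2⟩⟩

lemma IsCompact.exists_le_and_le_of_approx [TopologicalSpace X] (hK : IsCompact K)
    {f g : X → ℝ} (hf : ContinuousOn f K) (hg : ContinuousOn g K) {a b : ℝ}
    (h : ∀ ε > 0, ∃ y ∈ K, a - ε < f y ∧ b - ε < g y) : ∃ z ∈ K, a ≤ f z ∧ b ≤ g z := by
  obtain ⟨y₁, hy₁, -⟩ := h 1 one_pos
  obtain ⟨z, hz, hmax⟩ :=
    hK.exists_isMaxOn ⟨y₁, hy₁⟩ ((hf.sub continuousOn_const).inf (hg.sub continuousOn_const))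
  have hz_nonneg : 0 ≤ min (f z - a) (g z - b) := le_of_forall_sub_le fun ε hε => by
    obtain ⟨y, hy, hfy, hgy⟩ := h ε hε
    have hyz : min (f y - a) (g y - b) ≤ min (f z - a) (g z - b) := hmax hy
    have hy_gt : -ε < min (f y - a) (g y - b) := lt_min (by linarith) (by linarith)
    linarith
  exact ⟨z, hz, by simpa only [le_min_iff, sub_nonneg] using hz_nonneg⟩

end Compactness

section Interior

variable {n : ℕ} {U : Set (Euc n)} {r : ℝ}

lemma closure_inUr_subset (hr : 0 < r) : closure (inUr U r) ⊆ U := by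
  intro x hx
  have hrx : r ≤ infDist x (frontier U) := closure_minimal (fun y hy => hy.2.le)
    (isClosed_le continuous_const (continuous_infDist_pt _)) hx
  by_contra hxU
  have hxfr : x ∈ frontier U := by
    rw [frontier_eq_closure_inter_closure]
    exact ⟨closure_mono (fun y hy => hy.1) hx, subset_closure hxU⟩
  linarith [infDist_zero_of_mem hxfr]

lemma ball_inter_subset_inUr {s : ℝ} {x : Euc n} (hx : x ∈ inUr U (r + s)) :
    ball x s ∩ U ⊆ inUr U r := fun y hy => by
  have hxy : dist x y < s := by rw [dist_comm]; exact hy.1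
  exact ⟨hy.2, by
    linarith [hx.2, infDist_le_infDist_add_dist (x := x) (y := y) (s := frontier U)]⟩

end Interior

section Stationary

variable {n : ℕ} {H : Euc n → ℝ} {K S : Set (Euc n)} {f g : Euc n → ℝ} {t : ℝ} {x₀ : Euc n}

lemma stationary_of_isMaxOn_isMaxOn (hH0 : H 0 = 0) (hH : ∀ p, 0 ≤ H p) (ht : 0 < t)
    (hK : IsCompact K) (hSK : S ⊆ K) (hf : ContinuousOn f K) (hg : ContinuousOn g K)
    (hx₀ : x₀ ∈ S) (hmax : IsMaxOn (fun x => f x - g x) K x₀)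
    (hlex : IsMaxOn f {z ∈ K | f x₀ - g x₀ ≤ f z - g z} x₀)
    (hf₀ : 0 ≤ TupOn H S f t x₀ + TdnOn H S f t x₀ - 2 * f x₀)
    (hg₀ : TupOn H S g t x₀ + TdnOn H S g t x₀ - 2 * g x₀ ≤ 0) :
    (f x₀ = TupOn H S f t x₀ ∧ f x₀ = TdnOn H S f t x₀) ∧
      (g x₀ = TupOn H S g t x₀ ∧ g x₀ = TdnOn H S g t x₀) := by
  have hfA := (hK.bddAbove_image hf).mono (image_mono hSK)
  have hfB := (hK.bddBelow_image hf).mono (image_mono hSK)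
  have hgA := (hK.bddAbove_image hg).mono (image_mono hSK)
  have hgB := (hK.bddBelow_image hg).mono (image_mono hSK)
  have hcmp : ∀ y ∈ S, f y ≤ g y + (f x₀ - g x₀) := fun y hy => by
    have : f y - g y ≤ f x₀ - g x₀ := hmax (hSK hy)
    linarith
  have hPf := le_TupOn hH0 hH ht hx₀ hfA
  have hQf := TdnOn_le hH0 hH ht hx₀ hfB
  have hPg := le_TupOn hH0 hH ht hx₀ hgA
  have hQg := TdnOn_le hH0 hH ht hx₀ hgB
  have hP := TupOn_le_TupOn_add hH0 hH ht hx₀ hgA hcmp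
  have hQ := TdnOn_le_TdnOn_add hH0 hH ht hx₀ hfB hcmp
  have hPf_le : TupOn H S f t x₀ ≤ f x₀ := by
    obtain ⟨z, hzK, hfz, hz⟩ :=
        hK.exists_le_and_le_of_approx (b := f x₀ - g x₀) hf (hf.sub hg) fun ε hε => by
      obtain ⟨y, hy, hfy, hfgy⟩ := exists_near_TupOn hH0 hH ht hx₀ hgA hε (u := f)
      exact ⟨y, hSK hy, hfy, by simp only [Pi.sub_apply]; linarith⟩
    exact hfz.trans (hlex ⟨hzK, hz⟩)
  refine ⟨⟨?_, ?_⟩, ?_, ?_⟩ <;> linarith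

end Stationary

theorem stationary_point_lemma_general {n : ℕ} (H : Euc n → ℝ)
    (hH0 : H 0 = 0) (hHnonneg : ∀ p, 0 ≤ H p)
    (U : Set (Euc n)) (hUb : Bornology.IsBounded U)
    (α r t t₀ : ℝ) (hr : 0 < r)
    (ht₀up : ∀ w : Euc n → ℝ, UpperSemicontinuousOn w U → Bornology.IsBounded (w '' U) →
      oscOn w U ≤ α → ∀ x ∈ U, ∀ s : ℝ, 0 < s → s < t₀ →
        TupOn H U w s x = TupOn H (ball x r ∩ U) w s x)
    (ht₀dn : ∀ w : Euc n → ℝ, LowerSemicontinuousOn w U → Bornology.IsBounded (w '' U) →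
      oscOn w U ≤ α → ∀ x ∈ U, ∀ s : ℝ, 0 < s → s < t₀ →
        TdnOn H U w s x = TdnOn H (ball x r ∩ U) w s x)
    (f g : Euc n → ℝ) (hf : ContinuousOn f U) (hg : ContinuousOn g U)
    (hfb : Bornology.IsBounded (f '' U)) (hgb : Bornology.IsBounded (g '' U))
    (hfo : oscOn f U ≤ α) (hgo : oscOn g U ≤ α)
    (ht : 0 < t) (htt₀ : t < t₀)
    (hfg : ∀ x ∈ inUr U (2 * r),
      0 ≤ TupOn H U f t x + TdnOn H U f t x - 2 * f x ∧
      TupOn H U g t x + TdnOn H U g t x - 2 * g x ≤ 0) :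
    sSup ((fun x => f x - g x) '' closure (inUr U r)) =
        sSup ((fun x => f x - g x) '' (closure (inUr U r) \ inUr U (2 * r))) ∨
      ∃ x₀ ∈ inUr U (2 * r),
        (f x₀ = TupOn H U f t x₀ ∧ f x₀ = TdnOn H U f t x₀) ∧
        (g x₀ = TupOn H U g t x₀ ∧ g x₀ = TdnOn H U g t x₀) := by
  set K := closure (inUr U r)
  rcases K.eq_empty_or_nonempty with hKe | hKne
  · simp [hKe]
  have hKU : K ⊆ U := closure_inUr_subset hr
  have hK : IsCompact K := (hUb.subset fun y hy => hy.1).isCompact_closure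
  obtain ⟨x₀, hx₀K, hmax, hlex⟩ :=
    hK.exists_isMaxOn_isMaxOn (φ := fun x => f x - g x) hKne ((hf.sub hg).mono hKU)
      (hf.mono hKU)
  by_cases hx₀ : x₀ ∈ inUr U (2 * r)
  · right
    have hSK : ball x₀ r ∩ U ⊆ K :=
      (ball_inter_subset_inUr (by rwa [← two_mul])).trans subset_closure
    have hTf := ht₀up f hf.upperSemicontinuousOn hfb hfo x₀ hx₀.1 t ht htt₀
    have hDf := ht₀dn f hf.lowerSemicontinuousOn hfb hfo x₀ hx₀.1 t ht htt₀
    have hTg := ht₀up g hg.upperSemicontinuousOn hgb hgo x₀ hx₀.1 t ht htt₀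
    have hDg := ht₀dn g hg.lowerSemicontinuousOn hgb hgo x₀ hx₀.1 t ht htt₀
    obtain ⟨hf₀, hg₀⟩ := hfg x₀ hx₀
    rw [hTf, hDf] at hf₀
    rw [hTg, hDg] at hg₀
    refine ⟨x₀, hx₀, ?_⟩
    rw [hTf, hDf, hTg, hDg]
    exact stationary_of_isMaxOn_isMaxOn hH0 hHnonneg ht hK hSK (hf.mono hKU) (hg.mono hKU)
      ⟨mem_ball_self hr, hx₀.1⟩ hmax hlex hf₀ hg₀
  · left
    exact (hmax.csSup_image_eq hx₀K subset_rfl).trans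
      (hmax.csSup_image_eq (s := K \ inUr U (2 * r)) ⟨hx₀K, hx₀⟩ sdiff_subset).symm

/-- The stationary point lemma. -/
theorem stationary_point_lemma {n : ℕ} (hn : 1 ≤ n) (H : Euc n → ℝ)
    (hHconv : ConvexOn ℝ Set.univ H) (hH0 : H 0 = 0) (hHnonneg : ∀ p, 0 ≤ H p)
    (hHzb : Bornology.IsBounded {p : Euc n | H p = 0})
    (hHzi : interior {p : Euc n | H p = 0} = ∅)
    (U : Set (Euc n)) (hU : IsOpen U) (hUb : Bornology.IsBounded U)
    (α r t t₀ : ℝ) (hα : 0 < α) (hr : 0 < r) (ht₀ : 0 < t₀)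
    (ht₀up : ∀ w : Euc n → ℝ, UpperSemicontinuousOn w U → Bornology.IsBounded (w '' U) →
      oscOn w U ≤ α → ∀ x ∈ U, ∀ s : ℝ, 0 < s → s < t₀ →
        TupOn H U w s x = TupOn H (ball x r ∩ U) w s x)
    (ht₀dn : ∀ w : Euc n → ℝ, LowerSemicontinuousOn w U → Bornology.IsBounded (w '' U) →
      oscOn w U ≤ α → ∀ x ∈ U, ∀ s : ℝ, 0 < s → s < t₀ →
        TdnOn H U w s x = TdnOn H (ball x r ∩ U) w s x)
    (f g : Euc n → ℝ) (hf : ContinuousOn f U) (hg : ContinuousOn g U)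
    (hfb : Bornology.IsBounded (f '' U)) (hgb : Bornology.IsBounded (g '' U))
    (hfo : oscOn f U ≤ α) (hgo : oscOn g U ≤ α)
    (ht : 0 < t) (htt₀ : t < t₀)
    (hfg : ∀ x ∈ inUr U (2 * r),
      0 ≤ TupOn H U f t x + TdnOn H U f t x - 2 * f x ∧
      TupOn H U g t x + TdnOn H U g t x - 2 * g x ≤ 0) :
    sSup ((fun x => f x - g x) '' closure (inUr U r)) =
        sSup ((fun x => f x - g x) '' (closure (inUr U r) \ inUr U (2 * r))) ∨
      ∃ x₀ ∈ inUr U (2 * r),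
        (f x₀ = TupOn H U f t x₀ ∧ f x₀ = TdnOn H U f t x₀) ∧
        (g x₀ = TupOn H U g t x₀ ∧ g x₀ = TdnOn H U g t x₀) :=
  stationary_point_lemma_general H hH0 hHnonneg U hUb α r t t₀ hr ht₀up ht₀dn f g hf hg hfb hgb hfo
    hgo ht htt₀ hfg
end

section
/- Let U ⊆ ℝⁿ be open, u ∈ Lip_loc(U), and k ≥ 0. Then the following are equivalent: (i) H(Du(x)) ≤ k for almost every x ∈ U; (ii) u(x) − u(y) ≤ C_k(x − y) whenever the segment [x, y] is contained in U. -/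
open Set Metric MeasureTheory Filter Bornology
open scoped RealInnerProductSpace

/-!
Since the zero set of `H` is bounded, convexity makes every sublevel set `{H ≤ k}` bounded, and
`C_k` is its support function: `H p ≤ k` iff `⟪p, e⟫ ≤ C_k(e)` for every direction `e`
(Hahn–Banach for the converse). If `u` satisfies the cone estimate, positive homogeneity of `C_k` bounds every
directional derivative of `u` by `C_k` at each point of differentiability, so `H(Du) ≤ k` there;
elsewhere `Du` is the junk value `0` and `H 0 = 0 ≤ k`. Conversely, if `H(Du) ≤ k` a.e., then by
Fubini almost every small translate of the segment from `y` to `x` meets the exceptional set in a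
null set of times, so `t ↦ u(y + w + t(x - y))` is Lipschitz with derivative
`⟪Du, x - y⟫ ≤ C_k(x - y)` almost everywhere; the fundamental theorem of calculus for absolutely
continuous functions integrates this, and letting `w → 0` gives the estimate at `w = 0`.
-/

open scoped Topology

section Hamiltonian

variable {E : Type*} [NormedAddCommGroup E] [NormedSpace ℝ E] {H : E → ℝ} {k : ℝ}

lemma isBounded_sublevel_of_isBounded_zero [ProperSpace E] (hconv : ConvexOn ℝ univ H)
    (hc : Continuous H) (h0 : H 0 = 0) (hnonneg : ∀ p, 0 ≤ H p)
    (hzero : IsBounded {p | H p = 0}) (k : ℝ) : IsBounded {p | H p ≤ k} := by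
  obtain ⟨r, hr, hzero_sub⟩ := hzero.subset_ball_lt 0 0
  have hsphere : ∀ q ∈ sphere (0 : E) r, 0 < H q := fun q hq ↦
    (hnonneg q).lt_of_ne fun hq0 ↦ (mem_sphere_zero_iff_norm.1 hq ▸
      mem_ball_zero_iff.1 (hzero_sub hq0.symm)).false
  obtain ⟨m, hm, hm_le⟩ := (isCompact_sphere 0 r).exists_forall_le' hc.continuousOn hsphere
  -- Rescaling `p` onto the sphere and using convexity between `0` and `p` gives linear growth.
  have hgrowth : ∀ p : E, r ≤ ‖p‖ → m * ‖p‖ ≤ r * H p := by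
    intro p hp
    have hp0 : 0 < ‖p‖ := hr.trans_le hp
    have hs : (r / ‖p‖) • p ∈ sphere (0 : E) r := by
      rw [mem_sphere_zero_iff_norm, norm_smul, Real.norm_of_nonneg (by positivity),
        div_mul_cancel₀ _ hp0.ne']
    have hconv_le : H ((r / ‖p‖) • p) ≤ (r / ‖p‖) * H p := by
      simpa [h0] using hconv.2 (mem_univ p) (mem_univ 0) (by positivity)
        (sub_nonneg.2 ((div_le_one hp0).2 hp)) (add_sub_cancel _ _)
    have := (hm_le _ hs).trans hconv_le
    rwa [div_mul_eq_mul_div, le_div_iff₀ hp0] at this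
  refine (isBounded_closedBall (x := (0 : E)) (r := max r (r * k / m))).subset fun p hp ↦ ?_
  rw [mem_closedBall_zero_iff]
  rcases le_or_gt ‖p‖ r with hpr | hpr
  · exact hpr.trans (le_max_left _ _)
  · have hpk : H p ≤ k := hp
    refine le_max_of_le_right ((le_div_iff₀ hm).2 ?_)
    nlinarith [hgrowth p hpr.le]

lemma exists_nonneg_eq_add_smul (hc : Continuous H) (hbdd : IsBounded {p | H p ≤ k}) {p x : E}
    (hp : H p ≤ k) (hx : x ≠ 0) : ∃ t : ℝ, 0 ≤ t ∧ H (p + t • x) = k := by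
  obtain ⟨R, hR⟩ := hbdd.subset_closedBall 0
  set T := (R + ‖p‖ + 1) / ‖x‖
  have hT : 0 ≤ T := by
    have := (norm_nonneg p).trans (hR hp |> mem_closedBall_zero_iff.1)
    positivity
  have hk_le : k ≤ H (p + T • x) := by
    by_contra! hlt
    have hnorm := mem_closedBall_zero_iff.1 (hR hlt.le)
    have : ‖T • x‖ ≤ ‖p + T • x‖ + ‖p‖ := norm_le_add_norm_add' _ _
    rw [norm_smul, Real.norm_of_nonneg hT, div_mul_cancel₀ _ (norm_ne_zero_iff.2 hx)] at this
    linarith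
  obtain ⟨t, ht, htk⟩ := intermediate_value_Icc hT (by fun_prop : Continuous fun t : ℝ ↦
    H (p + t • x)).continuousOn ⟨by simpa using hp, hk_le⟩
  exact ⟨t, ht.1, htk⟩

end Hamiltonian

section ConeFunction

variable {n : ℕ} {H : Euc n → ℝ} {k : ℝ}

lemma bddAbove_inner_levelSet (hbdd : IsBounded {p | H p ≤ k}) (x : Euc n) :
    BddAbove {r : ℝ | ∃ p, H p = k ∧ r = ⟪p, x⟫} := by
  obtain ⟨R, hR⟩ := hbdd.subset_closedBall 0
  refine ⟨R * ‖x‖, ?_⟩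
  rintro _ ⟨p, hp, rfl⟩
  have hpR := mem_closedBall_zero_iff.1 (hR hp.le)
  exact (real_inner_le_norm p x).trans (by gcongr)

lemma inner_le_coneFn (hc : Continuous H) (hbdd : IsBounded {p | H p ≤ k}) {p : Euc n}
    (hp : H p ≤ k) (x : Euc n) : ⟪p, x⟫ ≤ coneFn H k x := by
  rcases eq_or_ne x 0 with rfl | hx
  · rw [inner_zero_right]
    exact Real.sSup_nonneg (by rintro _ ⟨q, -, rfl⟩; rw [inner_zero_right])
  obtain ⟨t, ht, htk⟩ := exists_nonneg_eq_add_smul hc hbdd hp hx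
  calc ⟪p, x⟫ ≤ ⟪p + t • x, x⟫ := by
        rw [inner_add_left, real_inner_smul_left, real_inner_self_eq_norm_sq]
        nlinarith [sq_nonneg ‖x‖]
    _ ≤ coneFn H k x := le_csSup (bddAbove_inner_levelSet hbdd x) ⟨_, htk, rfl⟩

lemma coneFn_smul {t : ℝ} (ht : 0 ≤ t) (x : Euc n) :
    coneFn H k (t • x) = t * coneFn H k x := by
  unfold coneFn
  rw [← smul_eq_mul, ← Real.sSup_smul_of_nonneg ht]
  congr 1
  ext r
  simp only [Set.mem_smul_set, real_inner_smul_right, smul_eq_mul]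
  aesop

lemma le_of_forall_inner_le_coneFn (hconv : ConvexOn ℝ univ H) (hc : Continuous H)
    (h0 : H 0 ≤ k) {g : Euc n} (hg : ∀ e, ⟪g, e⟫ ≤ coneFn H k e) : H g ≤ k := by
  by_contra! hgk
  obtain ⟨q, hq⟩ := intermediate_value_univ 0 g hc ⟨h0, hgk.le⟩
  have hsub : {p | H p ≤ k} = {p ∈ univ | H p ≤ k} := by simp
  obtain ⟨f, c, hfc, hcg⟩ := geometric_hahn_banach_closed_point
    (hsub ▸ hconv.convex_le k) (isClosed_le hc continuous_const) (not_le.2 hgk)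
  set e := (InnerProductSpace.toDual ℝ (Euc n)).symm f
  have hfe : ∀ z, ⟪z, e⟫ = f z := fun z ↦ by
    rw [real_inner_comm]; exact InnerProductSpace.toDual_symm_apply
  have hcone : coneFn H k e ≤ c := csSup_le ⟨_, q, hq, rfl⟩ <| by
    rintro _ ⟨p, hp, rfl⟩
    exact (hfe p ▸ hfc p hp.le).le
  linarith [hg e, hfe g]

end ConeFunction

lemma sub_le_mul_of_ae_deriv_le {g : ℝ → ℝ} {a b c : ℝ} (hab : a ≤ b)
    (hg : AbsolutelyContinuousOnInterval g a b) (hderiv : ∀ᵐ t, t ∈ Icc a b → deriv g t ≤ c) :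
    g b - g a ≤ c * (b - a) := by
  rw [← hg.integral_deriv_eq_sub]
  calc ∫ t in a..b, deriv g t ≤ ∫ _ in a..b, c :=
        intervalIntegral.integral_mono_ae_restrict hab hg.intervalIntegrable_deriv
          intervalIntegrable_const ((ae_restrict_iff' measurableSet_Icc).2 hderiv)
    _ = c * (b - a) := by simp [mul_comm]

lemma ae_ae_add_of_ae {α G : Type*} [MeasurableSpace α] [MeasurableSpace G] [AddGroup G]
    [MeasurableAdd₂ G] {ν : Measure α} {μ : Measure G} [SFinite ν] [SFinite μ]
    [μ.IsAddLeftInvariant] {γ : α → G} (hγ : Measurable γ) {P : G → Prop}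
    (hP : ∀ᵐ z ∂μ, P z) : ∀ᵐ w ∂μ, ∀ᵐ t ∂ν, P (γ t + w) := by
  have hshear : MeasurePreserving (fun q : α × G ↦ (id q.1, γ q.1 + q.2)) (ν.prod μ) (ν.prod μ) :=
    (MeasurePreserving.id ν).skew_product ((hγ.comp measurable_fst).add measurable_snd)
      (ae_of_all _ fun t ↦ map_add_left_eq_self μ (γ t))
  have hprod : ∀ᵐ q ∂(ν.prod μ), P (γ q.1 + q.2) :=
    hshear.quasiMeasurePreserving.ae (Measure.quasiMeasurePreserving_snd.ae hP)
  exact Measure.ae_ae_of_ae_prod (Measure.measurePreserving_swap.quasiMeasurePreserving.ae hprod)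

lemma HasFDerivAt.apply_le_of_eventually_sub_le {E : Type*} [NormedAddCommGroup E]
    [NormedSpace ℝ E] {f : E → ℝ} {f' : E →L[ℝ] ℝ} {x e : E} {c : ℝ} (hf : HasFDerivAt f f' x)
    (h : ∀ᶠ t in 𝓝[>] (0 : ℝ), f (x + t • e) - f x ≤ t * c) : f' e ≤ c := by
  have hslope := (hasDerivAt_iff_tendsto_slope.1 (hf.hasLineDerivAt e)).mono_left
    (nhdsGT_le_nhdsNE 0)
  refine le_of_tendsto hslope ?_
  filter_upwards [h, self_mem_nhdsWithin] with t ht (htpos : 0 < t)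
  rw [slope_def_field, zero_smul, add_zero, sub_zero, div_le_iff₀ htpos, mul_comm]
  exact ht

lemma sub_le_of_ae_fderiv_lineMap_le {E : Type*} [NormedAddCommGroup E] [NormedSpace ℝ E]
    {u : E → ℝ} {K : Set E} {L : NNReal} (hL : LipschitzOnWith L u K) {x y : E}
    (hK : MapsTo (AffineMap.lineMap y x) (Icc (0 : ℝ) 1) K) {c : ℝ}
    (hderiv : ∀ᵐ t : ℝ, t ∈ Icc 0 1 → DifferentiableAt ℝ u (AffineMap.lineMap y x t) ∧
      fderiv ℝ u (AffineMap.lineMap y x t) (x - y) ≤ c) :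
    u x - u y ≤ c := by
  have hac : AbsolutelyContinuousOnInterval (fun t ↦ u (AffineMap.lineMap y x t)) 0 1 :=
    (hL.comp (lipschitzWith_lineMap y x).lipschitzOnWith
      (uIcc_of_le (zero_le_one' ℝ) ▸ hK)).absolutelyContinuousOnInterval
  have hderiv' : ∀ᵐ t, t ∈ Icc (0 : ℝ) 1 → deriv (fun t ↦ u (AffineMap.lineMap y x t)) t ≤ c := by
    filter_upwards [hderiv] with t ht htI
    obtain ⟨hd, hle⟩ := ht htI
    have hcomp : HasDerivAt (fun t ↦ u (AffineMap.lineMap y x t))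
        (fderiv ℝ u (AffineMap.lineMap y x t) (x - y)) t :=
      hd.hasFDerivAt.comp_hasDerivAt t AffineMap.hasDerivAt_lineMap
    rwa [hcomp.deriv]
  simpa using sub_le_mul_of_ae_deriv_le zero_le_one hac hderiv'

lemma ContinuousAt.le_of_ae_le_of_mem_nhds {X : Type*} [TopologicalSpace X] [MeasurableSpace X]
    {μ : Measure X} [μ.IsOpenPosMeasure] {f : X → ℝ} {a : X} {s : Set X} {c : ℝ}
    (hf : ContinuousAt f a) (hs : s ∈ 𝓝 a) (hle : ∀ᵐ w ∂μ, w ∈ s → f w ≤ c) : f a ≤ c := by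
  by_contra! hlt
  have hbad : s ∩ {w | c < f w} ∈ 𝓝 a := Filter.inter_mem hs (hf.eventually (lt_mem_nhds hlt))
  refine (μ.measure_pos_of_mem_nhds hbad).ne' (measure_eq_zero_iff_ae_notMem.2 ?_)
  filter_upwards [hle] with w hw ⟨hws, hwc⟩
  exact (hw hws).not_gt hwc

lemma sub_le_of_ae_fderiv_le {E : Type*} [NormedAddCommGroup E] [NormedSpace ℝ E]
    [FiniteDimensional ℝ E] [MeasurableSpace E] [BorelSpace E] {μ : Measure E}
    [μ.IsAddHaarMeasure] {u : E → ℝ} {U : Set E} (hU : IsOpen U) (hu : LocallyLipschitzOn U u)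
    {x y : E} (hxy : segment ℝ x y ⊆ U) {c : ℝ}
    (hderiv : ∀ᵐ z ∂μ, z ∈ U → DifferentiableAt ℝ u z → fderiv ℝ u z (x - y) ≤ c) :
    u x - u y ≤ c := by
  let γ : ℝ → E := AffineMap.lineMap y x
  have hseg : segment ℝ x y = γ '' Icc 0 1 := by rw [segment_symm, segment_eq_image_lineMap]
  have hS : IsCompact (segment ℝ x y) := hseg ▸ isCompact_Icc.image AffineMap.lineMap_continuous
  obtain ⟨δ, hδ, hKU⟩ := hS.exists_cthickening_subset_open hU hxy
  set V := thickening δ (segment ℝ x y)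
  have hVK : V ⊆ cthickening δ (segment ℝ x y) := thickening_subset_cthickening δ _
  have hV_nhds : ∀ z ∈ V, cthickening δ (segment ℝ x y) ∈ 𝓝 z := fun z hz ↦
    mem_of_superset (isOpen_thickening.mem_nhds hz) hVK
  obtain ⟨L, hL⟩ := (hu.mono hKU).exists_lipschitzOnWith_of_compact hS.cthickening
  have hgood : ∀ᵐ z ∂μ, z ∈ V → DifferentiableAt ℝ u z ∧ fderiv ℝ u z (x - y) ≤ c := by
    filter_upwards [hL.ae_differentiableWithinAt_of_mem, hderiv] with z hdiff hle hzV
    have hd := (hdiff (hVK hzV)).differentiableAt (hV_nhds z hzV)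
    exact ⟨hd, hle (hKU (hVK hzV)) hd⟩
  -- The segment itself may lie in the exceptional null set, but almost all its translates don't.
  have hshift : ∀ᵐ w ∂μ, w ∈ ball 0 δ → u (x + w) - u (y + w) ≤ c := by
    filter_upwards [ae_ae_add_of_ae (ν := volume) (γ := γ) AffineMap.lineMap_continuous.measurable
      hgood] with w hw hwδ
    have hγw : ∀ t : ℝ, AffineMap.lineMap (y + w) (x + w) t = γ t + w := fun t ↦ by
      simp only [γ, AffineMap.lineMap_apply_module]; module
    have hγV : ∀ t ∈ Icc (0 : ℝ) 1, γ t + w ∈ V := fun t ht ↦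
      mem_thickening_iff.2 ⟨γ t, hseg ▸ mem_image_of_mem γ ht, by simpa using hwδ⟩
    refine sub_le_of_ae_fderiv_lineMap_le hL (fun t ht ↦ hγw t ▸ hVK (hγV t ht)) ?_
    filter_upwards [hw] with t ht htI
    rw [hγw, add_sub_add_right_eq_sub]
    exact ht (hγV t htI)
  have hu_at : ∀ z ∈ segment ℝ x y, ContinuousAt u z := fun z hz ↦
    hL.continuousOn.continuousAt (hV_nhds z (self_subset_thickening hδ _ hz))
  have hcont : ContinuousAt (fun w ↦ u (x + w) - u (y + w)) 0 :=
    ((hu_at x (left_mem_segment ℝ x y)).comp_of_eq (continuous_const_add x).continuousAt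
      (add_zero x)).sub ((hu_at y (right_mem_segment ℝ x y)).comp_of_eq
      (continuous_const_add y).continuousAt (add_zero y))
  simpa using hcont.le_of_ae_le_of_mem_nhds (ball_mem_nhds 0 hδ) hshift

lemma gradient_le_of_sub_le_coneFn {n : ℕ} {H : Euc n → ℝ} {k : ℝ} (hconv : ConvexOn ℝ univ H)
    (hc : Continuous H) (h0 : H 0 ≤ k) {U : Set (Euc n)} (hU : IsOpen U) {u : Euc n → ℝ}
    (hcone : ∀ x y, segment ℝ x y ⊆ U → u x - u y ≤ coneFn H k (x - y)) {x : Euc n}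
    (hx : x ∈ U) : H (gradient u x) ≤ k := by
  by_cases hd : DifferentiableAt ℝ u x
  swap
  · rwa [gradient_eq_zero_of_not_differentiableAt hd]
  refine le_of_forall_inner_le_coneFn hconv hc h0 fun e ↦ ?_
  rw [inner_gradient_left]
  refine hd.hasFDerivAt.apply_le_of_eventually_sub_le ?_
  obtain ⟨ρ, hρ, hball⟩ := Metric.isOpen_iff.1 hU x hx
  have hnear : ∀ᶠ t in 𝓝 (0 : ℝ), x + t • e ∈ ball x ρ :=
    (Continuous.tendsto' (by fun_prop) 0 x (by simp)).eventually (ball_mem_nhds x hρ)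
  filter_upwards [nhdsWithin_le_nhds hnear, self_mem_nhdsWithin] with t ht (htpos : 0 < t)
  have := hcone (x + t • e) x (((convex_ball x ρ).segment_subset ht (mem_ball_self hρ)).trans hball)
  rwa [add_sub_cancel_left, coneFn_smul htpos.le] at this

theorem gradient_bound_iff_cone_estimate_general {n : ℕ} (H : Euc n → ℝ)
    (hHconv : ConvexOn ℝ Set.univ H) (hH0 : H 0 = 0) (hHnonneg : ∀ p, 0 ≤ H p)
    (hHzb : Bornology.IsBounded {p : Euc n | H p = 0})
    (U : Set (Euc n)) (hU : IsOpen U) (u : Euc n → ℝ)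
    (hu : LocLipOn u U) (k : ℝ) (hk : 0 ≤ k) :
    (∀ᵐ x ∂(volume.restrict U), H (gradient u x) ≤ k) ↔
      ∀ x y : Euc n, segment ℝ x y ⊆ U → u x - u y ≤ coneFn H k (x - y) := by
  have hHc : Continuous H := continuousOn_univ.1 (hHconv.continuousOn isOpen_univ)
  have hbdd := isBounded_sublevel_of_isBounded_zero hHconv hHc hH0 hHnonneg hHzb k
  constructor
  · intro hae x y hxy
    refine sub_le_of_ae_fderiv_le (μ := volume) hU hu hxy ?_
    filter_upwards [ae_imp_of_ae_restrict hae] with z hz hzU _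
    rw [← inner_gradient_left]
    exact inner_le_coneFn hHc hbdd (hz hzU) _
  · intro hcone
    filter_upwards [ae_restrict_mem hU.measurableSet] with x hx
    exact gradient_le_of_sub_le_coneFn hHconv hHc (hH0 ▸ hk) hU hcone hx

/-- For `u ∈ Lip_loc(U)`, `H(Du) ≤ k` a.e. in `U` iff `u(x) - u(y) ≤ C_k(x-y)` whenever
the segment `[x,y]` lies in `U`. -/
theorem gradient_bound_iff_cone_estimate {n : ℕ} (hn : 1 ≤ n) (H : Euc n → ℝ)
    (hHconv : ConvexOn ℝ Set.univ H) (hH0 : H 0 = 0) (hHnonneg : ∀ p, 0 ≤ H p)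
    (hHzb : Bornology.IsBounded {p : Euc n | H p = 0})
    (hHzi : interior {p : Euc n | H p = 0} = ∅)
    (U : Set (Euc n)) (hU : IsOpen U) (u : Euc n → ℝ)
    (hu : LocLipOn u U) (k : ℝ) (hk : 0 ≤ k) :
    (∀ᵐ x ∂(volume.restrict U), H (gradient u x) ≤ k) ↔
      ∀ x y : Euc n, segment ℝ x y ⊆ U → u x - u y ≤ coneFn H k (x - y) :=
  gradient_bound_iff_cone_estimate_general H hHconv hH0 hHnonneg hHzb U hU u hu k hk
end

section
/- Let k ≥ 0. Then: (i) for every y ∈ ℝⁿ and every t > 0, C_k(y) ≤ kt + t L(y/t), and equality holds whenever y ∈ t Γ_k; (ii) for every open set U ⊆ ℝⁿ and every x ∈ U, for all sufficiently small t > 0 one has T^t C_k(x) = C_k(x) + kt, where T^t is computed relative to U applied to the restriction of the function z ↦ C_k(z) to U. -/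
open Set Metric MeasureTheory Filter Bornology
open scoped RealInnerProductSpace Pointwise

/-! Since the zero set of `H` is bounded and `H ≥ 0` is convex, `H` grows at least linearly at
infinity, so the level set `{H = k}` is compact, and it is nonempty by the intermediate value
theorem; hence `C_k(x) = p₀·x` for some `p₀` with `H p₀ = k`.

For `H p = k`, the Fenchel–Young inequality `p·y ≤ t H(p) + t L(y/t)` gives (i) after maximising
over `p`. If `q ∈ ∂H(p₀)` then the supremum defining `L(q)` is attained at `p₀`, and `p₀` maximises
`p ↦ p·q` on `{H = H p₀}`; this gives equality on `tΓ_k`.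

For (ii), (i) applied to `y - x` bounds every term of `T^t C_k(x)` by `C_k(x) + kt`. Taking
`q ∈ ∂H(p₀)` (a supporting hyperplane of the epigraph), `p₀` maximises both `p·x` and `p·q` on
`{H = k}`, hence `p·(x + tq)`, so the point `y = x + tq`, which lies in `U` for small `t`,
attains the bound. -/

section ConvexCoercive

variable {E : Type*} [NormedAddCommGroup E] [NormedSpace ℝ E] {f : E → ℝ}

theorem ConvexOn.continuous [FiniteDimensional ℝ E] (hf : ConvexOn ℝ univ f) : Continuous f :=
  continuousOn_univ.1 (hf.continuousOn isOpen_univ)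

theorem ConvexOn.map_smul_le_of_map_zero (hf : ConvexOn ℝ univ f) (h0 : f 0 = 0) {a : ℝ}
    (ha₀ : 0 ≤ a) (ha₁ : a ≤ 1) (p : E) : f (a • p) ≤ a * f p := by
  simpa [h0] using hf.2 (mem_univ p) (mem_univ 0) ha₀ (sub_nonneg.2 ha₁) (add_sub_cancel a 1)

theorem ConvexOn.isBounded_sublevel_of_isBounded_zero [FiniteDimensional ℝ E]
    (hf : ConvexOn ℝ univ f) (h0 : f 0 = 0) (hnonneg : ∀ p, 0 ≤ f p)
    (hbdd : IsBounded {p | f p = 0}) (c : ℝ) : IsBounded {p | f p ≤ c} := by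
  rcases subsingleton_or_nontrivial E with _ | _
  · exact IsBounded.all _
  obtain ⟨r, hr₀, hr⟩ := hbdd.subset_ball_lt 0 0
  obtain ⟨pm, hpm, hmin⟩ := (isCompact_sphere (0 : E) r).exists_isMinOn
    (NormedSpace.sphere_nonempty.2 hr₀.le) hf.continuous.continuousOn
  have hm : 0 < f pm := (hnonneg pm).lt_of_ne fun h =>
    (mem_sphere_zero_iff_norm.1 hpm ▸ mem_ball_zero_iff.1 (hr h.symm)).false
  have hgrowth : ∀ p : E, r ≤ ‖p‖ → f pm * ‖p‖ ≤ r * f p := by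
    intro p hp
    have hp₀ : 0 < ‖p‖ := hr₀.trans_le hp
    have hsphere : (r / ‖p‖) • p ∈ sphere (0 : E) r := by
      rw [mem_sphere_zero_iff_norm, norm_smul, Real.norm_of_nonneg (by positivity),
        div_mul_cancel₀ _ hp₀.ne']
    have h := (isMinOn_iff.1 hmin _ hsphere).trans
      (hf.map_smul_le_of_map_zero h0 (by positivity) ((div_le_one hp₀).2 hp) p)
    rwa [div_mul_eq_mul_div, le_div_iff₀ hp₀] at h
  refine (isBounded_closedBall (x := (0 : E)) (r := max r (r * c / f pm))).subset fun p hp => ?_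
  rw [mem_closedBall_zero_iff]
  by_cases hpr : ‖p‖ ≤ r
  · exact hpr.trans (le_max_left _ _)
  · refine le_max_of_le_right ((le_div_iff₀ hm).2 ?_)
    calc ‖p‖ * f pm = f pm * ‖p‖ := mul_comm _ _
      _ ≤ r * f p := hgrowth p (le_of_not_ge hpr)
      _ ≤ r * c := mul_le_mul_of_nonneg_left hp hr₀.le

theorem exists_eq_of_isBounded_sublevel [Nontrivial E] (hf : Continuous f) (h0 : f 0 = 0)
    {k : ℝ} (hk : 0 ≤ k) (hbdd : IsBounded {p | f p ≤ k}) : ∃ p, f p = k := by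
  obtain ⟨b, hb⟩ : ∃ b, k ≤ f b := by
    by_contra! h
    exact NormedSpace.unbounded_univ ℝ E (hbdd.subset fun p _ => (h p).le)
  exact intermediate_value_univ 0 b hf ⟨h0 ▸ hk, hb⟩

end ConvexCoercive

theorem isMaxOn_inner_smul {F : Type*} [NormedAddCommGroup F] [InnerProductSpace ℝ F]
    {s : Set F} {p₀ z : F} {t : ℝ} (h : IsMaxOn (fun p => ⟪p, z⟫) s p₀) (ht : 0 ≤ t) :
    IsMaxOn (fun p => ⟪p, t • z⟫) s p₀ := isMaxOn_iff.2 fun p hp => by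
  simp only [real_inner_smul_right]
  exact mul_le_mul_of_nonneg_left (isMaxOn_iff.1 h p hp) ht

variable {n : ℕ} {H : Euc n → ℝ} {k t : ℝ}

theorem subdiff_nonempty (hH : ConvexOn ℝ univ H) (p₀ : Euc n) : (subdiff H p₀).Nonempty := by
  have hconv : Convex ℝ {z : Euc n × ℝ | H z.1 < z.2} := by
    simpa using hH.convex_strict_epigraph
  obtain ⟨f, hf⟩ := geometric_hahn_banach_open_point hconv
    (isOpen_lt (hH.continuous.comp continuous_fst) continuous_snd) (x := (p₀, H p₀)) (by simp)
  set g : Euc n →L[ℝ] ℝ := f.comp (ContinuousLinearMap.inl ℝ (Euc n) ℝ)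
  set α : ℝ := f (0, 1)
  have hf_eq : ∀ (z : Euc n) (c : ℝ), f (z, c) = g z + c * α := by
    intro z c
    have hz : ((z, c) : Euc n × ℝ) = (z, 0) + c • ((0 : Euc n), (1 : ℝ)) := by ext <;> simp
    rw [hz, map_add, map_smul, smul_eq_mul]
    rfl
  have hsep : ∀ z c, H z < c → g z + c * α < g p₀ + H p₀ * α := fun z c hc => by
    simpa only [hf_eq] using hf (z, c) hc
  have hα : 0 < -α := by linarith [hsep p₀ (H p₀ + 1) (by linarith)]
  -- The separating functional is `(z, c) ↦ g z + α c` with `α < 0`; rescaled to `α = -1`, its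
  -- level sets are supporting hyperplanes of the epigraph at `(p₀, H p₀)`.
  refine ⟨(-α)⁻¹ • (InnerProductSpace.toDual ℝ (Euc n)).symm g, fun z => ?_⟩
  rw [real_inner_smul_left, InnerProductSpace.toDual_symm_apply, map_sub, inv_mul_eq_div]
  refine le_of_forall_gt_imp_ge_of_dense fun c hc => ?_
  have h := hsep z c hc
  have : (g z - g p₀) / -α < c - H p₀ := by
    rw [div_lt_iff₀ hα]
    linarith
  linarith

theorem isMaxOn_inner_of_mem_subdiff {p₀ q : Euc n} (hp₀ : H p₀ = k) (hq : q ∈ subdiff H p₀) :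
    IsMaxOn (fun p => ⟪p, q⟫) {p | H p = k} p₀ := isMaxOn_iff.2 fun p hp => by
  have h := hq p
  rw [inner_sub_right, real_inner_comm p q, real_inner_comm p₀ q, hp₀, hp] at h
  linarith

theorem inner_sub_le_lag (H : Euc n → ℝ) (p q : Euc n) :
    ((⟪p, q⟫ - H p : ℝ) : EReal) ≤ Lag H q :=
  le_iSup (fun p : Euc n => ((⟪p, q⟫ - H p : ℝ) : EReal)) p

theorem lag_eq_of_mem_subdiff {p₀ q : Euc n} (hq : q ∈ subdiff H p₀) :
    Lag H q = ((⟪p₀, q⟫ - H p₀ : ℝ) : EReal) := by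
  refine le_antisymm (iSup_le fun p => EReal.coe_le_coe_iff.2 ?_) (inner_sub_le_lag H p₀ q)
  have h := hq p
  rw [inner_sub_right, real_inner_comm p q, real_inner_comm p₀ q] at h
  linarith

theorem inner_le_add_mul_lag {p : Euc n} (hp : H p = k) (ht : 0 < t) (y : Euc n) :
    ((⟪p, y⟫ : ℝ) : EReal) ≤ ((k * t : ℝ) : EReal) + (t : EReal) * Lag H (t⁻¹ • y) := by
  have h := mul_le_mul_of_nonneg_left (inner_sub_le_lag H p (t⁻¹ • y))
    (EReal.coe_nonneg.2 ht.le)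
  calc ((⟪p, y⟫ : ℝ) : EReal)
      = ((k * t : ℝ) : EReal) + (t : EReal) * ((⟪p, t⁻¹ • y⟫ - H p : ℝ) : EReal) := by
        rw [← EReal.coe_mul, ← EReal.coe_add, EReal.coe_eq_coe_iff, real_inner_smul_right, hp]
        field_simp
        ring
    _ ≤ _ := add_le_add_right h _

theorem coneFn_le {z : Euc n} {b : EReal} (hne : ∃ p, H p = k)
    (h : ∀ p, H p = k → ((⟪p, z⟫ : ℝ) : EReal) ≤ b) : ((coneFn H k z : ℝ) : EReal) ≤ b := by
  obtain ⟨p₀, hp₀⟩ := hne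
  induction b using EReal.rec with
  | bot => exact absurd (h p₀ hp₀) (by simp)
  | coe b =>
    exact EReal.coe_le_coe_iff.2 <| csSup_le ⟨_, p₀, hp₀, rfl⟩ fun r ⟨p, hp, hr⟩ =>
      hr ▸ EReal.coe_le_coe_iff.1 (h p hp)
  | top => exact le_top

theorem coneFn_eq_of_isMaxOn {p₀ z : Euc n} (hp₀ : H p₀ = k)
    (hmax : IsMaxOn (fun p => ⟪p, z⟫) {p | H p = k} p₀) : coneFn H k z = ⟪p₀, z⟫ :=
  IsGreatest.csSup_eq ⟨⟨p₀, hp₀, rfl⟩, fun _ ⟨p, hp, hr⟩ => hr ▸ isMaxOn_iff.1 hmax p hp⟩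

theorem coneFn_le_add_mul_lag (hne : ∃ p, H p = k) (ht : 0 < t) (y : Euc n) :
    ((coneFn H k y : ℝ) : EReal) ≤ ((k * t : ℝ) : EReal) + (t : EReal) * Lag H (t⁻¹ • y) :=
  coneFn_le hne fun _ hp => inner_le_add_mul_lag hp ht y

theorem coneFn_eq_add_mul_lag_of_mem (ht : 0 < t) {y : Euc n} (hy : y ∈ t • GammaSet H k) :
    ((coneFn H k y : ℝ) : EReal) = ((k * t : ℝ) : EReal) + (t : EReal) * Lag H (t⁻¹ • y) := by
  obtain ⟨q, ⟨p₀, hp₀, hq⟩, rfl⟩ := hy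
  rw [coneFn_eq_of_isMaxOn hp₀ (isMaxOn_inner_smul (isMaxOn_inner_of_mem_subdiff hp₀ hq) ht.le),
    inv_smul_smul₀ ht.ne', lag_eq_of_mem_subdiff hq, hp₀, ← EReal.coe_mul, ← EReal.coe_add,
    EReal.coe_eq_coe_iff, real_inner_smul_right]
  ring

theorem tupOn_eq_of_forall_le_of_exists_eq {S : Set (Euc n)} {u : Euc n → ℝ} {x : Euc n} {c : ℝ}
    (ht : t ≠ 0) (hle : ∀ y ∈ S, (u y : EReal) - (t : EReal) * Lag H (t⁻¹ • (y - x)) ≤ c)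
    (heq : ∃ y ∈ S, (u y : EReal) - (t : EReal) * Lag H (t⁻¹ • (y - x)) = c) :
    TupOn H S u t x = c := by
  rw [TupOn, if_neg ht]
  obtain ⟨y, hy, hyc⟩ := heq
  exact IsGreatest.csSup_eq
    ⟨⟨y, hy, hyc.symm⟩, fun _ ⟨z, hz, hr⟩ => EReal.coe_le_coe_iff.1 (hr ▸ hle z hz)⟩

theorem tupOn_coneFn_eq {U : Set (Euc n)} {x q p₀ : Euc n} (hp₀ : H p₀ = k)
    (hmax : IsMaxOn (fun p => ⟪p, x⟫) {p | H p = k} p₀) (hq : q ∈ subdiff H p₀) (ht : 0 < t)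
    (hxq : x + t • q ∈ U) : TupOn H U (coneFn H k) t x = coneFn H k x + k * t := by
  have hcone_x := coneFn_eq_of_isMaxOn hp₀ hmax
  refine tupOn_eq_of_forall_le_of_exists_eq ht.ne' (fun y _ => ?_) ⟨x + t • q, hxq, ?_⟩
  · refine EReal.sub_le_of_le_add (coneFn_le ⟨p₀, hp₀⟩ fun p hp => ?_)
    calc ((⟪p, y⟫ : ℝ) : EReal) = ((⟪p, x⟫ : ℝ) : EReal) + ((⟪p, y - x⟫ : ℝ) : EReal) := by
          rw [← EReal.coe_add, inner_sub_right, add_sub_cancel]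
      _ ≤ (coneFn H k x : EReal) + (((k * t : ℝ) : EReal) + t * Lag H (t⁻¹ • (y - x))) :=
          add_le_add (EReal.coe_le_coe_iff.2 (hcone_x ▸ isMaxOn_iff.1 hmax p hp))
            (inner_le_add_mul_lag hp ht _)
      _ = _ := by rw [← add_assoc, EReal.coe_add]
  · have hmax' : IsMaxOn (fun p => ⟪p, x + t • q⟫) {p | H p = k} p₀ := by
      simpa only [inner_add_right] using
        hmax.add (isMaxOn_inner_smul (isMaxOn_inner_of_mem_subdiff hp₀ hq) ht.le)
    rw [coneFn_eq_of_isMaxOn hp₀ hmax', add_sub_cancel_left, inv_smul_smul₀ ht.ne',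
      lag_eq_of_mem_subdiff hq, hcone_x, hp₀, ← EReal.coe_mul, ← EReal.coe_sub,
      EReal.coe_eq_coe_iff, inner_add_right, real_inner_smul_right]
    ring

theorem cone_flow_general {n : ℕ} (hn : 1 ≤ n) (H : Euc n → ℝ)
    (hHconv : ConvexOn ℝ Set.univ H) (hH0 : H 0 = 0) (hHnonneg : ∀ p, 0 ≤ H p)
    (hHzb : Bornology.IsBounded {p : Euc n | H p = 0})
    (k : ℝ) (hk : 0 ≤ k) :
    (∀ (y : Euc n) (t : ℝ), 0 < t →
      ((coneFn H k y : ℝ) : EReal) ≤ ((k * t : ℝ) : EReal) + (t : EReal) * Lag H (t⁻¹ • y) ∧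
      (y ∈ t • GammaSet H k →
        ((coneFn H k y : ℝ) : EReal) =
          ((k * t : ℝ) : EReal) + (t : EReal) * Lag H (t⁻¹ • y))) ∧
    (∀ U : Set (Euc n), IsOpen U → ∀ x ∈ U, ∃ t₁ > (0:ℝ), ∀ t : ℝ, 0 < t → t < t₁ →
      TupOn H U (coneFn H k) t x = coneFn H k x + k * t) := by
  have : Nontrivial (Euc n) :=
    Module.nontrivial_of_finrank_pos (R := ℝ) (by rw [finrank_euclideanSpace_fin]; exact hn)
  have hsub := hHconv.isBounded_sublevel_of_isBounded_zero hH0 hHnonneg hHzb k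
  have hne : ∃ p, H p = k := exists_eq_of_isBounded_sublevel hHconv.continuous hH0 hk hsub
  have hcpt : IsCompact {p : Euc n | H p = k} := Metric.isCompact_of_isClosed_isBounded
    (isClosed_eq hHconv.continuous continuous_const) (hsub.subset fun _ hp => le_of_eq hp)
  refine ⟨fun y t ht => ⟨coneFn_le_add_mul_lag hne ht y, coneFn_eq_add_mul_lag_of_mem ht⟩,
    fun U hU x hx => ?_⟩
  obtain ⟨p₀, hp₀, hmax⟩ :=
    hcpt.exists_isMaxOn hne
      (continuous_id.inner continuous_const : Continuous fun p : Euc n => ⟪p, x⟫).continuousOn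
  obtain ⟨q, hq⟩ := subdiff_nonempty hHconv p₀
  obtain ⟨ε, hε, hball⟩ := Metric.isOpen_iff.1 hU x hx
  refine ⟨ε / (‖q‖ + 1), by positivity, fun t ht htε => tupOn_coneFn_eq hp₀ hmax hq ht (hball ?_)⟩
  rw [mem_ball, dist_self_add_left, norm_smul, Real.norm_of_nonneg ht.le]
  calc t * ‖q‖ ≤ t * (‖q‖ + 1) := by gcongr; linarith
    _ < ε := (lt_div_iff₀ (by positivity)).1 htε

/-- The Hopf–Lax flow of cone functions: `C_k(y) ≤ kt + tL(y/t)` with equality on `tΓ_k`,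
and `T^t C_k(x) = C_k(x) + kt` for small `t`. -/
theorem cone_flow {n : ℕ} (hn : 1 ≤ n) (H : Euc n → ℝ)
    (hHconv : ConvexOn ℝ Set.univ H) (hH0 : H 0 = 0) (hHnonneg : ∀ p, 0 ≤ H p)
    (hHzb : Bornology.IsBounded {p : Euc n | H p = 0})
    (hHzi : interior {p : Euc n | H p = 0} = ∅)
    (k : ℝ) (hk : 0 ≤ k) :
    (∀ (y : Euc n) (t : ℝ), 0 < t →
      ((coneFn H k y : ℝ) : EReal) ≤ ((k * t : ℝ) : EReal) + (t : EReal) * Lag H (t⁻¹ • y) ∧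
      (y ∈ t • GammaSet H k →
        ((coneFn H k y : ℝ) : EReal) =
          ((k * t : ℝ) : EReal) + (t : EReal) * Lag H (t⁻¹ • y))) ∧
    (∀ U : Set (Euc n), IsOpen U → ∀ x ∈ U, ∃ t₁ > (0:ℝ), ∀ t : ℝ, 0 < t → t < t₁ →
      TupOn H U (coneFn H k) t x = coneFn H k x + k * t) :=
  cone_flow_general hn H hHconv hH0 hHnonneg hHzb k hk
end
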